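/- arXiv:2009.09291 — 2 statements merged into one kernel-verified Lean document; each statement's English description precedes it below -/
import Mathlib

section
/- Let n ≥ 1, α > 0 and s > 1 satisfy αs ≤ n, and let s' = s/(s-1). Let μ be a nonnegative (locally finite Borel) measure on ℝⁿ with support contained in the ball B_{1/2}(0), and set f = (G_α*μ)^{s'-1} and f₂ = f · χ_{{|x| ≥ 3}}. Then there exists a constant A = A(n, α, s) > 0 such that f₂(x) ≤ A · G_α*f(x) for every x ∈ ℝⁿ. -/
open MeasureTheory ENNReal Metric Set

noncomputable section

/-- Euclidean space `ℝⁿ`. -/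
abbrev Rn (n : ℕ) : Type := EuclideanSpace ℝ (Fin n)

/-- The Bessel kernel `G_α` on `ℝⁿ`. -/
def besselKernel (n : ℕ) (α : ℝ) (x : Rn n) : ℝ≥0∞ :=
  ENNReal.ofReal ((4 * Real.pi) ^ (-α / 2) / Real.Gamma (α / 2) *
    ∫ t in Ioi (0 : ℝ),
      Real.exp (-Real.pi * ‖x‖ ^ 2 / t) * Real.exp (-t / (4 * Real.pi)) *
        t ^ ((α - (n : ℝ)) / 2 - 1))

/-- The convolution `G_α * f` of the Bessel kernel with `f : ℝⁿ → [0,∞]`. -/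
def besselConv (n : ℕ) (α : ℝ) (f : Rn n → ℝ≥0∞) (x : Rn n) : ℝ≥0∞ :=
  ∫⁻ y, besselKernel n α (x - y) * f y

/-- The convolution `G_α * μ` of the Bessel kernel with a measure `μ`. -/
def besselConvMeasure (n : ℕ) (α : ℝ) (μ : Measure (Rn n)) (x : Rn n) : ℝ≥0∞ :=
  ∫⁻ y, besselKernel n α (x - y) ∂μ

/-- The Bessel capacity `Cap_{α,s}`. -/
def besselCap (n : ℕ) (α s : ℝ) (E : Set (Rn n)) : ℝ≥0∞ :=
  sInf {c | ∃ f : Rn n → ℝ≥0∞, Measurable f ∧ (∀ x ∈ E, 1 ≤ besselConv n α f x) ∧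
    c = ∫⁻ x, f x ^ s}

/-- The Choquet integral `∫ w dCap_{α,s}`. -/
def choquetBessel (n : ℕ) (α s : ℝ) (w : Rn n → ℝ≥0∞) : ℝ≥0∞ :=
  ∫⁻ t in Ioi (0 : ℝ), besselCap n α s {x | ENNReal.ofReal t < w x}

/-- The nonlinear energy `∫ f^s (G_α*f)^{1-s} dx`, interpreted as `∞` when `f = ∞` on a
set of positive Lebesgue measure (the integrand vanishes where `f = 0`). -/
def besselEnergy (n : ℕ) (α s : ℝ) (f : Rn n → ℝ≥0∞) : ℝ≥0∞ :=
  if volume {x | f x = ∞} = 0 then ∫⁻ x, f x ^ s * besselConv n α f x ^ (1 - s)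
  else ∞

/-- The norm of the Sobolev multiplier type space `M^{α,s}_p`. -/
def Mnorm (n : ℕ) (α s p : ℝ) (g : Rn n → ℝ≥0∞) : ℝ≥0∞ :=
  ⨆ (K : Set (Rn n)) (_ : IsCompact K) (_ : besselCap n α s K ≠ 0),
    ((∫⁻ x in K, g x ^ p) / besselCap n α s K) ^ (1 / p)

/-- The Köthe dual norm of `M^{α,s}_p`. -/
def dualMnorm (n : ℕ) (α s p : ℝ) (f : Rn n → ℝ≥0∞) : ℝ≥0∞ :=
  ⨆ (g : Rn n → ℝ≥0∞) (_ : Measurable g)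
    (_ : ∀ K : Set (Rn n), IsCompact K → (∫⁻ x in K, g x ^ p) ≠ ∞)
    (_ : Mnorm n α s p g ≤ 1), ∫⁻ x, f x * g x

/-- The quantity `λ_{α,s}(u)` (applied to `w = |u|`). -/
def lambdaB (n : ℕ) (α s : ℝ) (w : Rn n → ℝ≥0∞) : ℝ≥0∞ :=
  sInf {c | ∃ f : Rn n → ℝ≥0∞, Measurable f ∧ dualMnorm n α s (s / (s - 1)) f ≠ ∞ ∧
    besselCap n α s {x | ¬ w x ≤ besselConv n α f x} = 0 ∧
    c = dualMnorm n α s (s / (s - 1)) f}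

/-- The quantity `β_{α,s}(u)` (applied to `w = |u|`). -/
def betaB (n : ℕ) (α s : ℝ) (w : Rn n → ℝ≥0∞) : ℝ≥0∞ :=
  sInf {c | ∃ f : Rn n → ℝ≥0∞, Measurable f ∧
    besselCap n α s {x | ¬ w x ≤ besselConv n α f x} = 0 ∧
    c = besselEnergy n α s f}

/-- The Riesz kernel `I_α` on `ℝⁿ`. -/
def rieszKernel (n : ℕ) (α : ℝ) (x : Rn n) : ℝ≥0∞ :=
  ENNReal.ofReal (Real.Gamma (((n : ℝ) - α) / 2) /
      (Real.pi ^ ((n : ℝ) / 2) * 2 ^ α * Real.Gamma (α / 2))) *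
    ENNReal.ofReal ‖x‖ ^ (α - (n : ℝ))

/-- The Riesz potential `I_α * f` of `f : ℝⁿ → [0,∞]`. -/
def rieszConv (n : ℕ) (α : ℝ) (f : Rn n → ℝ≥0∞) (x : Rn n) : ℝ≥0∞ :=
  ∫⁻ y, rieszKernel n α (x - y) * f y

/-- The Riesz capacity `cap_{α,s}`. -/
def rieszCap (n : ℕ) (α s : ℝ) (E : Set (Rn n)) : ℝ≥0∞ :=
  sInf {c | ∃ f : Rn n → ℝ≥0∞, Measurable f ∧ (∀ x ∈ E, 1 ≤ rieszConv n α f x) ∧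
    c = ∫⁻ x, f x ^ s}

/-- The Choquet integral `∫ w dcap_{α,s}`. -/
def choquetRiesz (n : ℕ) (α s : ℝ) (w : Rn n → ℝ≥0∞) : ℝ≥0∞ :=
  ∫⁻ t in Ioi (0 : ℝ), rieszCap n α s {x | ENNReal.ofReal t < w x}

/-- The nonlinear Riesz energy `∫ f^s (I_α*f)^{1-s} dx`. -/
def rieszEnergy (n : ℕ) (α s : ℝ) (f : Rn n → ℝ≥0∞) : ℝ≥0∞ :=
  if volume {x | f x = ∞} = 0 then ∫⁻ x, f x ^ s * rieszConv n α f x ^ (1 - s)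
  else ∞

/-- The quantity `β^R_{α,s}(u)` (applied to `w = |u|`). -/
def betaR (n : ℕ) (α s : ℝ) (w : Rn n → ℝ≥0∞) : ℝ≥0∞ :=
  sInf {c | ∃ f : Rn n → ℝ≥0∞, Measurable f ∧
    rieszCap n α s {x | ¬ w x ≤ rieszConv n α f x} = 0 ∧
    c = rieszEnergy n α s f}

/-- The centered local Hardy–Littlewood maximal function. -/
def locMaximal (n : ℕ) (w : Rn n → ℝ≥0∞) (x : Rn n) : ℝ≥0∞ :=
  ⨆ (r : ℝ) (_ : 0 < r) (_ : r ≤ 1),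
    (∫⁻ y in ball x r, w y) / volume (ball x r)

/-- The centered Hardy–Littlewood maximal function. -/
def maximal (n : ℕ) (w : Rn n → ℝ≥0∞) (x : Rn n) : ℝ≥0∞ :=
  ⨆ (r : ℝ) (_ : 0 < r), (∫⁻ y in ball x r, w y) / volume (ball x r)



private lemma aux_integrable {a b γ : ℝ} (ha : 0 < a) (hb : 0 < b) :
    MeasureTheory.IntegrableOn
      (fun t : ℝ => Real.exp (-(a / t)) * Real.exp (-(b * t)) * t ^ γ) (Set.Ioi 0) := by
  have hmeas : ∀ s : Set ℝ, MeasurableSet s →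
      AEStronglyMeasurable (fun t : ℝ => Real.exp (-(a / t)) * Real.exp (-(b * t)) * t ^ γ)
        (volume.restrict s) := by
    intro s hs
    apply Measurable.aestronglyMeasurable
    fun_prop
  have hsplit : Set.Ioi (0:ℝ) = Set.Ioc 0 1 ∪ Set.Ioi 1 :=
    (Set.Ioc_union_Ioi_eq_Ioi zero_le_one).symm
  rw [hsplit]
  apply MeasureTheory.IntegrableOn.union
  · set m : ℕ := ⌈-γ⌉₊ + 1 with hm
    have hmγ : -1 < (m : ℝ) + γ := by
      have := Nat.le_ceil (-γ)
      have : -γ ≤ (⌈-γ⌉₊ : ℝ) := this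
      push_cast [hm]
      linarith
    apply MeasureTheory.Integrable.mono'
      (g := fun t : ℝ => (m.factorial / a ^ m) * t ^ ((m : ℝ) + γ))
    · apply MeasureTheory.Integrable.const_mul
      have h := intervalIntegral.intervalIntegrable_rpow' (a := (0:ℝ)) (b := 1) hmγ
      rw [intervalIntegrable_iff] at h
      have h' : IntegrableOn (fun x : ℝ => x ^ ((m : ℝ) + γ)) (Ioc 0 1) volume := by
        simpa [Set.uIoc_of_le (zero_le_one' ℝ)] using h
      exact h'
    · exact hmeas _ measurableSet_Ioc
    · filter_upwards [MeasureTheory.ae_restrict_mem measurableSet_Ioc] with t ht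
      obtain ⟨ht0, ht1⟩ := ht
      rw [Real.norm_eq_abs, abs_of_nonneg (by positivity)]
      have h1 : Real.exp (-(a / t)) ≤ m.factorial * t ^ m / a ^ m := by
        have h2 : (a / t) ^ m / m.factorial ≤ Real.exp (a / t) :=
          Real.pow_div_factorial_le_exp (x := a / t) (by positivity) m
        have h3 : (0:ℝ) < (a / t) ^ m / m.factorial := by positivity
        rw [Real.exp_neg]
        calc (Real.exp (a / t))⁻¹ ≤ ((a / t) ^ m / m.factorial)⁻¹ :=
              inv_anti₀ h3 h2
          _ = m.factorial * t ^ m / a ^ m := by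
              rw [div_pow]
              field_simp
      have h4 : Real.exp (-(b * t)) ≤ 1 := by
        rw [← Real.exp_zero]
        exact Real.exp_le_exp.mpr (by nlinarith)
      calc Real.exp (-(a / t)) * Real.exp (-(b * t)) * t ^ γ
          ≤ (m.factorial * t ^ m / a ^ m) * 1 * t ^ γ := by
            gcongr <;> first
              | exact Real.exp_nonneg _
              | exact h1
              | exact h4
              | positivity
        _ = (m.factorial / a ^ m) * ((t ^ (m:ℝ)) * t ^ γ) := by
            rw [Real.rpow_natCast]; ring
        _ = (m.factorial / a ^ m) * t ^ ((m : ℝ) + γ) := by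
            rw [← Real.rpow_add ht0]
  · set m : ℕ := ⌈γ⌉₊ with hm
    apply MeasureTheory.Integrable.mono'
      (g := fun t : ℝ => (m.factorial * (2 / b) ^ m) * Real.exp (-(b / 2) * t))
    · exact (exp_neg_integrableOn_Ioi 1 (by positivity)).const_mul _
    · exact hmeas _ measurableSet_Ioi
    · filter_upwards [MeasureTheory.ae_restrict_mem measurableSet_Ioi] with t ht
      have ht1 : (1:ℝ) < t := ht
      have ht0 : (0:ℝ) < t := lt_trans one_pos ht1
      rw [Real.norm_eq_abs, abs_of_nonneg (by positivity)]
      have h1 : t ^ γ ≤ t ^ m := by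
        rw [← Real.rpow_natCast t m]
        exact Real.rpow_le_rpow_of_exponent_le ht1.le (Nat.le_ceil γ)
      have h2 : (t:ℝ) ^ m ≤ m.factorial * (2 / b) ^ m * Real.exp (b / 2 * t) := by
        have h3 : (b / 2 * t) ^ m / m.factorial ≤ Real.exp (b / 2 * t) :=
          Real.pow_div_factorial_le_exp (x := b / 2 * t) (by positivity) m
        rw [div_le_iff₀ (by positivity)] at h3
        calc (t:ℝ) ^ m = (2 / b) ^ m * (b / 2 * t) ^ m := by
              rw [← mul_pow]
              congr 1
              field_simp
          _ ≤ (2 / b) ^ m * (Real.exp (b / 2 * t) * m.factorial) := by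
              gcongr
          _ = m.factorial * (2 / b) ^ m * Real.exp (b / 2 * t) := by ring
      have h4 : Real.exp (-(a / t)) ≤ 1 := by
        rw [← Real.exp_zero]
        exact Real.exp_le_exp.mpr (neg_nonpos.mpr (by positivity))
      calc Real.exp (-(a / t)) * Real.exp (-(b * t)) * t ^ γ
          ≤ 1 * Real.exp (-(b * t)) * (m.factorial * (2 / b) ^ m * Real.exp (b / 2 * t)) := by
            gcongr <;> first
              | exact Real.exp_nonneg _
              | exact h1.trans h2
              | exact h4
              | positivity
        _ = (m.factorial * (2 / b) ^ m) * (Real.exp (-(b * t)) * Real.exp (b / 2 * t)) := by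
            ring
        _ = (m.factorial * (2 / b) ^ m) * Real.exp (-(b / 2) * t) := by
            rw [← Real.exp_add]
            congr 1
            ring


private def C0 (α : ℝ) : ℝ := (4 * Real.pi) ^ (-α / 2) / Real.Gamma (α / 2)

private def Kfun (n : ℕ) (α : ℝ) (r : ℝ) : ℝ :=
  ∫ t in Ioi (0 : ℝ),
    Real.exp (-Real.pi * r ^ 2 / t) * Real.exp (-t / (4 * Real.pi)) *
      t ^ ((α - (n : ℝ)) / 2 - 1)

private lemma besselKernel_eq (n : ℕ) (α : ℝ) (x : Rn n) :
    besselKernel n α x = ENNReal.ofReal (C0 α * Kfun n α ‖x‖) := rfl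

private lemma C0_pos {α : ℝ} (hα : 0 < α) : 0 < C0 α :=
  div_pos (Real.rpow_pos_of_pos (by positivity) _) (Real.Gamma_pos_of_pos (by linarith))

private lemma Kfun_integrableOn (n : ℕ) (α : ℝ) {r : ℝ} (hr : 0 < r) :
    MeasureTheory.IntegrableOn
      (fun t : ℝ => Real.exp (-Real.pi * r ^ 2 / t) * Real.exp (-t / (4 * Real.pi)) *
        t ^ ((α - (n : ℝ)) / 2 - 1)) (Set.Ioi 0) := by
  have heq : (fun t : ℝ => Real.exp (-Real.pi * r ^ 2 / t) * Real.exp (-t / (4 * Real.pi)) *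
        t ^ ((α - (n : ℝ)) / 2 - 1))
      = fun t : ℝ => Real.exp (-(Real.pi * r ^ 2 / t)) *
          Real.exp (-(1 / (4 * Real.pi) * t)) * t ^ ((α - (n : ℝ)) / 2 - 1) := by
    funext t
    rw [show -Real.pi * r ^ 2 / t = -(Real.pi * r ^ 2 / t) by ring,
      show -t / (4 * Real.pi) = -(1 / (4 * Real.pi) * t) by ring]
  rw [heq]
  exact aux_integrable (by positivity) (by positivity)

private lemma Kfun_anti (n : ℕ) (α : ℝ) {r₁ r₂ : ℝ} (h1 : 0 < r₁) (h12 : r₁ ≤ r₂) :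
    Kfun n α r₂ ≤ Kfun n α r₁ := by
  apply MeasureTheory.integral_mono_of_nonneg
  · filter_upwards [MeasureTheory.ae_restrict_mem measurableSet_Ioi] with t ht
    have ht0 : (0:ℝ) < t := ht
    positivity
  · exact Kfun_integrableOn n α h1
  · filter_upwards [MeasureTheory.ae_restrict_mem measurableSet_Ioi] with t ht
    have ht0 : (0:ℝ) < t := ht
    have hexp : Real.exp (-Real.pi * r₂ ^ 2 / t) ≤ Real.exp (-Real.pi * r₁ ^ 2 / t) := by
      apply Real.exp_le_exp.mpr
      have hnum : -Real.pi * r₂ ^ 2 ≤ -Real.pi * r₁ ^ 2 := by nlinarith [Real.pi_pos, mul_le_mul h12 h12 h1.le (h1.le.trans h12)]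
      have h := mul_le_mul_of_nonneg_right hnum (inv_nonneg.mpr ht0.le)
      simpa [div_eq_mul_inv] using h
    exact mul_le_mul_of_nonneg_right (mul_le_mul_of_nonneg_right hexp (Real.exp_nonneg _))
      (Real.rpow_nonneg ht0.le _)

private lemma Kfun_pos (n : ℕ) (α : ℝ) {r : ℝ} (hr : 0 < r) : 0 < Kfun n α r := by
  set h : ℝ → ℝ := fun t => Real.exp (-Real.pi * r ^ 2 / t) * Real.exp (-t / (4 * Real.pi)) *
      t ^ ((α - (n : ℝ)) / 2 - 1) with hh
  have hint : MeasureTheory.IntegrableOn h (Set.Ioi 0) := Kfun_integrableOn n α hr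
  have h12 : (0:ℝ) < ∫ t in (1:ℝ)..2, h t := by
    apply intervalIntegral.intervalIntegral_pos_of_pos_on
    · rw [intervalIntegrable_iff]
      apply hint.mono_set
      rw [Set.uIoc_of_le (by norm_num : (1:ℝ) ≤ 2)]
      exact fun t ht => lt_trans one_pos ht.1
    · intro t ht
      have ht0 : (0:ℝ) < t := lt_trans one_pos ht.1
      rw [hh]
      positivity
    · norm_num
  have hle : (∫ t in (1:ℝ)..2, h t) ≤ Kfun n α r := by
    rw [intervalIntegral.integral_of_le (by norm_num : (1:ℝ) ≤ 2)]
    apply MeasureTheory.setIntegral_mono_set hint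
    · filter_upwards [MeasureTheory.ae_restrict_mem measurableSet_Ioi] with t ht
      have ht0 : (0:ℝ) < t := ht
      rw [hh]
      positivity
    · exact HasSubset.Subset.eventuallyLE (fun t ht => lt_trans one_pos ht.1)
  linarith

private lemma besselKernel_anti (n : ℕ) {α : ℝ} (hα : 0 < α) {w₁ w₂ : Rn n}
    (h1 : 0 < ‖w₁‖) (h12 : ‖w₁‖ ≤ ‖w₂‖) :
    besselKernel n α w₂ ≤ besselKernel n α w₁ := by
  rw [besselKernel_eq, besselKernel_eq]
  exact ENNReal.ofReal_le_ofReal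
    (mul_le_mul_of_nonneg_left (Kfun_anti n α h1 h12) (C0_pos hα).le)


/-- for `μ` supported in `B_{1/2}(0)`, `f = (G_α*μ)^{s'-1}` and
`f₂ = f·χ_{{|x|≥3}}`, one has `f₂ ≤ A G_α*f` pointwise everywhere. -/
theorem tail_pointwise_bound (n : ℕ) (α s : ℝ)
    (hn : 1 ≤ n) (hα : 0 < α) (hs : 1 < s) (hαs : α * s ≤ (n : ℝ)) :
    ∃ A : ℝ≥0∞, 0 < A ∧ A ≠ ∞ ∧
      ∀ μ : Measure (Rn n), IsLocallyFiniteMeasure μ →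
        μ (ball (0 : Rn n) (1 / 2))ᶜ = 0 →
        ∀ f f₂ : Rn n → ℝ≥0∞,
          f = (fun y => besselConvMeasure n α μ y ^ (s / (s - 1) - 1)) →
          f₂ = {y : Rn n | 3 ≤ ‖y‖}.indicator f →
          ∀ x : Rn n, f₂ x ≤ A * besselConv n α f x := by
  have hC0 := C0_pos hα
  have hK : 0 < Kfun n α (5/2) := Kfun_pos n α (by norm_num)
  set c₀ : ℝ≥0∞ := ENNReal.ofReal (C0 α * Kfun n α (5/2)) with hc₀
  have hc₀pos : 0 < c₀ := ENNReal.ofReal_pos.mpr (by positivity)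
  have hc₀top : c₀ ≠ ∞ := ENNReal.ofReal_ne_top
  set V : ℝ≥0∞ := volume (ball (0 : Rn n) (1/2)) with hV
  have hVpos : 0 < V := measure_ball_pos _ _ (by norm_num)
  have hVtop : V ≠ ∞ := measure_ball_lt_top.ne
  refine ⟨(c₀ * V)⁻¹, ?_, ?_, ?_⟩
  · exact ENNReal.inv_pos.mpr (ENNReal.mul_ne_top hc₀top hVtop)
  · exact ENNReal.inv_ne_top.mpr (mul_ne_zero hc₀pos.ne' hVpos.ne')
  intro μ hloc hμ f f₂ hf hf₂ x
  by_cases hx : 3 ≤ ‖x‖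
  swap
  · rw [hf₂, Set.indicator_of_notMem (by simpa using hx)]
    exact zero_le
  have hx0 : (0:ℝ) < ‖x‖ := by linarith
  set c : Rn n := (1 - 2/‖x‖) • x with hc
  have hcn : ‖c‖ = ‖x‖ - 2 := by
    rw [hc, norm_smul, Real.norm_eq_abs,
      abs_of_nonneg (by rw [sub_nonneg, div_le_one hx0]; linarith),
      sub_mul, one_mul, div_mul_cancel₀ _ hx0.ne']
  have hxc : ‖x - c‖ = 2 := by
    have hxc' : x - c = (2/‖x‖) • x := by
      rw [hc, sub_smul, one_smul]
      abel
    rw [hxc', norm_smul, Real.norm_eq_abs, abs_of_nonneg (by positivity),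
      div_mul_cancel₀ _ hx0.ne']
  have hs1 : (0:ℝ) < s - 1 := by linarith
  have hexp0 : (0:ℝ) ≤ s / (s - 1) - 1 := by
    rw [sub_nonneg, le_div_iff₀ hs1]
    linarith
  have hae : ∀ᵐ y ∂μ, ‖y‖ < 1/2 := by
    rw [MeasureTheory.ae_iff]
    convert hμ using 2
    ext y
    simp [mem_ball_zero_iff]
  have hmono : ∀ z ∈ ball c (1/2 : ℝ), f x ≤ f z := by
    intro z hz
    have hzc : ‖z - c‖ < 1/2 := by rwa [mem_ball, dist_eq_norm] at hz
    rw [hf]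
    apply ENNReal.rpow_le_rpow _ hexp0
    unfold besselConvMeasure
    apply MeasureTheory.lintegral_mono_ae
    filter_upwards [hae] with y hy
    have hzn1 : ‖x‖ - 2 - 1/2 ≤ ‖z‖ := by
      have h1 := norm_sub_norm_le c z
      rw [show c - z = -(z - c) by abel, norm_neg] at h1
      linarith
    have hzn2 : ‖z‖ ≤ ‖z - c‖ + ‖c‖ := by
      have := norm_add_le (z - c) c
      rwa [sub_add_cancel] at this
    apply besselKernel_anti n hα
    · have := norm_sub_norm_le z y
      have h0 : (0:ℝ) < ‖z‖ - ‖y‖ := by linarith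
      linarith
    · have h1 : ‖z - y‖ ≤ ‖z‖ + ‖y‖ := norm_sub_le z y
      have h2 : ‖x‖ - ‖y‖ ≤ ‖x - y‖ := norm_sub_norm_le x y
      linarith
  have hlow : ∀ z ∈ ball c (1/2 : ℝ), c₀ * f x ≤ besselKernel n α (x - z) * f z := by
    intro z hz
    have hzc : ‖z - c‖ < 1/2 := by rwa [mem_ball, dist_eq_norm] at hz
    have hker : c₀ ≤ besselKernel n α (x - z) := by
      have htri : ‖x - c‖ ≤ ‖x - z‖ + ‖z - c‖ := by
        have := norm_add_le (x - z) (z - c)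
        rwa [show x - z + (z - c) = x - c by abel] at this
      have hxz1 : (0:ℝ) < ‖x - z‖ := by rw [hxc] at htri; linarith
      have hxz2 : ‖x - z‖ ≤ 5/2 := by
        have h1 : ‖x - z‖ ≤ ‖x - c‖ + ‖c - z‖ := by
          have := norm_add_le (x - c) (c - z)
          rwa [show x - c + (c - z) = x - z by abel] at this
        rw [show c - z = -(z - c) by abel, norm_neg] at h1
        rw [hxc] at h1
        linarith
      rw [besselKernel_eq, hc₀]
      exact ENNReal.ofReal_le_ofReal
        (mul_le_mul_of_nonneg_left (Kfun_anti n α hxz1 hxz2) hC0.le)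
    exact mul_le_mul' hker (hmono z hz)
  have hconv : c₀ * f x * V ≤ besselConv n α f x := by
    calc c₀ * f x * V = ∫⁻ _ in ball c (1/2 : ℝ), c₀ * f x := by
          rw [MeasureTheory.setLIntegral_const,
            MeasureTheory.Measure.addHaar_ball_center volume c]
      _ ≤ ∫⁻ z in ball c (1/2 : ℝ), besselKernel n α (x - z) * f z := by
          apply MeasureTheory.lintegral_mono_ae
          rw [MeasureTheory.ae_restrict_iff' measurableSet_ball]
          exact MeasureTheory.ae_of_all _ hlow
      _ ≤ besselConv n α f x := by
          unfold besselConv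
          exact MeasureTheory.setLIntegral_le_lintegral _ _
  rw [hf₂, Set.indicator_of_mem (by simpa using hx)]
  calc f x = (c₀ * V)⁻¹ * (c₀ * V) * f x := by
        rw [ENNReal.inv_mul_cancel (mul_ne_zero hc₀pos.ne' hVpos.ne')
          (ENNReal.mul_ne_top hc₀top hVtop), one_mul]
    _ = (c₀ * V)⁻¹ * (c₀ * f x * V) := by ring
    _ ≤ (c₀ * V)⁻¹ * besselConv n α f x := mul_le_mul_right hconv _


end
end

section
/- Let n ≥ 1, α > 0 and s > 1. Let f be a nonnegative measurable function on ℝⁿ and set f₁ = f · χ_{B_3(0)}. Then for every x ∈ ℝⁿ with |x| ≥ 10 one has (G_α*f₁(x))^s ≤ G_α*[f₁ (G_α*f₁)^{s-1}](x). -/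
open MeasureTheory ENNReal Metric Set

noncomputable section

lemma integrableOn_besselIntegrand {r β : ℝ} (hr : 0 < r) :
    IntegrableOn (fun t : ℝ =>
      Real.exp (-Real.pi * r ^ 2 / t) * Real.exp (-t / (4 * Real.pi)) * t ^ β)
      (Ioi (0 : ℝ)) := by
  obtain ⟨k, hk⟩ := exists_nat_gt (-1 - β)
  set c : ℝ := Real.pi * r ^ 2 with hc
  have hc0 : 0 < c := by positivity
  have hbase : IntegrableOn
      (fun t : ℝ => t ^ (β + (k : ℝ)) * Real.exp (-(4 * Real.pi)⁻¹ * t)) (Ioi 0) := by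
    have := integrableOn_rpow_mul_exp_neg_mul_rpow (s := β + (k : ℝ)) (p := 1)
      (by linarith) zero_lt_one (by positivity : (0:ℝ) < (4 * Real.pi)⁻¹)
    simpa [Real.rpow_one] using this
  have hdom : IntegrableOn
      (fun t : ℝ => ((k.factorial : ℝ) / c ^ k) *
        (t ^ (β + (k : ℝ)) * Real.exp (-(4 * Real.pi)⁻¹ * t))) (Ioi 0) :=
    hbase.const_mul _
  have hcont : ContinuousOn (fun t : ℝ =>
      Real.exp (-Real.pi * r ^ 2 / t) * Real.exp (-t / (4 * Real.pi)) * t ^ β) (Ioi 0) := by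
    have h1 : ContinuousOn (fun t : ℝ => Real.exp (-Real.pi * r ^ 2 / t)) (Ioi 0) :=
      Real.continuous_exp.comp_continuousOn
        (continuousOn_const.div continuousOn_id fun t ht => ne_of_gt ht)
    have h2 : ContinuousOn (fun t : ℝ => Real.exp (-t / (4 * Real.pi))) (Ioi 0) :=
      (Real.continuous_exp.comp ((continuous_id.neg).div_const _)).continuousOn
    have h3 : ContinuousOn (fun t : ℝ => t ^ β) (Ioi 0) := fun t ht =>
      (Real.continuousAt_rpow_const t β (Or.inl (ne_of_gt ht))).continuousWithinAt
    exact (h1.mul h2).mul h3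
  refine Integrable.mono' hdom (hcont.aestronglyMeasurable measurableSet_Ioi) ?_
  filter_upwards [ae_restrict_mem measurableSet_Ioi] with t ht
  have ht0 : (0 : ℝ) < t := ht
  have hnn : (0 : ℝ) ≤ Real.exp (-Real.pi * r ^ 2 / t) * Real.exp (-t / (4 * Real.pi)) * t ^ β :=
    mul_nonneg (mul_nonneg (Real.exp_nonneg _) (Real.exp_nonneg _)) (Real.rpow_nonneg ht0.le _)
  rw [Real.norm_eq_abs, abs_of_nonneg hnn]
  have hek : Real.exp (-Real.pi * r ^ 2 / t) ≤ (k.factorial : ℝ) * t ^ k / c ^ k := by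
    have h1 : (c / t) ^ k / (k.factorial : ℝ) ≤ Real.exp (c / t) :=
      Real.pow_div_factorial_le_exp (x := c / t) (by positivity) k
    have h2 : (0 : ℝ) < (c / t) ^ k / (k.factorial : ℝ) := by positivity
    have heq : -Real.pi * r ^ 2 / t = -(c / t) := by rw [hc]; ring
    rw [heq, Real.exp_neg]
    calc (Real.exp (c / t))⁻¹ ≤ ((c / t) ^ k / (k.factorial : ℝ))⁻¹ :=
          inv_anti₀ h2 h1
      _ = (k.factorial : ℝ) * t ^ k / c ^ k := by
          rw [div_pow]; field_simp
  have he2 : Real.exp (-t / (4 * Real.pi)) = Real.exp (-(4 * Real.pi)⁻¹ * t) := by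
    congr 1; ring
  calc Real.exp (-Real.pi * r ^ 2 / t) * Real.exp (-t / (4 * Real.pi)) * t ^ β
      ≤ ((k.factorial : ℝ) * t ^ k / c ^ k) * Real.exp (-t / (4 * Real.pi)) * t ^ β :=
        mul_le_mul_of_nonneg_right
          (mul_le_mul_of_nonneg_right hek (Real.exp_nonneg _)) (Real.rpow_nonneg ht0.le _)
    _ = ((k.factorial : ℝ) / c ^ k) *
        (t ^ (β + (k : ℝ)) * Real.exp (-(4 * Real.pi)⁻¹ * t)) := by
        rw [Real.rpow_add ht0, Real.rpow_natCast, ← he2]; ring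

/-- The Bessel kernel is radially decreasing (away from the origin). -/
lemma besselKernel_anti_s12 (n : ℕ) {α : ℝ} (hα : 0 < α) {a b : Rn n}
    (ha : 0 < ‖a‖) (hab : ‖a‖ ≤ ‖b‖) :
    besselKernel n α b ≤ besselKernel n α a := by
  unfold besselKernel
  apply ENNReal.ofReal_le_ofReal
  have hconst : (0 : ℝ) ≤ (4 * Real.pi) ^ (-α / 2) / Real.Gamma (α / 2) :=
    div_nonneg (Real.rpow_nonneg (by positivity) _)
      (Real.Gamma_pos_of_pos (by linarith)).le
  refine mul_le_mul_of_nonneg_left ?_ hconst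
  have hb : 0 < ‖b‖ := lt_of_lt_of_le ha hab
  refine setIntegral_mono_on (integrableOn_besselIntegrand hb)
    (integrableOn_besselIntegrand ha) measurableSet_Ioi ?_
  intro t ht
  have ht0 : (0 : ℝ) < t := ht
  refine mul_le_mul_of_nonneg_right (mul_le_mul_of_nonneg_right ?_ (Real.exp_nonneg _))
    (Real.rpow_nonneg ht0.le _)
  apply Real.exp_le_exp.2
  have hnum : -Real.pi * ‖b‖ ^ 2 ≤ -Real.pi * ‖a‖ ^ 2 := by
    nlinarith [Real.pi_pos, mul_le_mul hab hab ha.le (norm_nonneg b)]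
  exact (div_le_div_iff_of_pos_right ht0).mpr hnum

/-- for `f₁ = f·χ_{B_3(0)}` and `|x| ≥ 10`,
`(G_α*f₁(x))^s ≤ G_α*[f₁ (G_α*f₁)^{s-1}](x)`. -/
theorem conv_far_field_bound (n : ℕ) (α s : ℝ)
    (hn : 1 ≤ n) (hα : 0 < α) (hs : 1 < s)
    (f : Rn n → ℝ≥0∞) (hf : Measurable f)
    (f₁ : Rn n → ℝ≥0∞) (hf₁ : f₁ = (ball (0 : Rn n) 3).indicator f)
    (x : Rn n) (hx : 10 ≤ ‖x‖) :
    besselConv n α f₁ x ^ s ≤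
      besselConv n α (fun y => f₁ y * besselConv n α f₁ y ^ (s - 1)) x := by
  set I := besselConv n α f₁ x with hI
  haveI : Nontrivial (Rn n) := by
    refine ⟨⟨0, EuclideanSpace.single ⟨0, hn⟩ 1, ?_⟩⟩
    intro h
    have := congrArg (fun v : Rn n => v ⟨0, hn⟩) h.symm
    simp [EuclideanSpace.single] at this
  -- Step 1: for `y` in the ball, `G*f₁(y) ≥ G*f₁(x)`.
  have hkey : ∀ y ∈ ball (0 : Rn n) 3, I ≤ besselConv n α f₁ y := by
    intro y hy
    have hae : ∀ᵐ z : Rn n, z ≠ y := by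
      have hset : {z : Rn n | ¬ z ≠ y} = {y} := by ext z; simp
      rw [ae_iff, hset]
      exact measure_singleton y
    refine lintegral_mono_ae ?_
    filter_upwards [hae] with z hz
    rcases eq_or_ne (f₁ z) 0 with h0 | h0
    · simp [h0]
    · have hzball : z ∈ ball (0 : Rn n) 3 := by
        by_contra hc
        exact h0 (by simp [hf₁, Set.indicator_of_notMem hc])
      have hz3 : ‖z‖ < 3 := mem_ball_zero_iff.1 hzball
      have hy3 : ‖y‖ < 3 := mem_ball_zero_iff.1 hy
      have h1 : 0 < ‖y - z‖ := by
        rw [norm_pos_iff]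
        exact sub_ne_zero.2 (Ne.symm hz)
      have h2 : ‖y - z‖ ≤ ‖x - z‖ := by
        have ha : ‖y - z‖ ≤ ‖y‖ + ‖z‖ := norm_sub_le _ _
        have hb : ‖x‖ - ‖z‖ ≤ ‖x - z‖ := norm_sub_norm_le _ _
        linarith
      exact mul_le_mul_left (besselKernel_anti_s12 n hα h1 h2) _
  -- Step 2: pointwise comparison inside the outer convolution.
  have hstep : ∫⁻ y, besselKernel n α (x - y) * (f₁ y * I ^ (s - 1)) ≤
      besselConv n α (fun y => f₁ y * besselConv n α f₁ y ^ (s - 1)) x := by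
    refine lintegral_mono fun y => ?_
    rcases eq_or_ne (f₁ y) 0 with h0 | h0
    · simp [h0]
    · have hyball : y ∈ ball (0 : Rn n) 3 := by
        by_contra hc
        exact h0 (by simp [hf₁, Set.indicator_of_notMem hc])
      exact mul_le_mul_right (mul_le_mul_right
        (ENNReal.rpow_le_rpow (hkey y hyball) (by linarith)) _) _
  by_cases hItop : I = ⊤
  · have h1 : I ≤ ∫⁻ y, besselKernel n α (x - y) * (f₁ y * I ^ (s - 1)) := by
      calc I = ∫⁻ y, besselKernel n α (x - y) * f₁ y := rfl
        _ ≤ ∫⁻ y, besselKernel n α (x - y) * (f₁ y * I ^ (s - 1)) := by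
            refine lintegral_mono fun y => ?_
            rw [← mul_assoc]
            exact le_mul_of_one_le_right' (by
              simp [hItop, ENNReal.top_rpow_of_pos (by linarith : (0:ℝ) < s - 1)])
    calc I ^ s ≤ ⊤ := le_top
      _ = I := hItop.symm
      _ ≤ _ := h1.trans hstep
  · have hIs : I ^ (s - 1) ≠ ⊤ := ENNReal.rpow_ne_top_of_nonneg (by linarith) hItop
    have heq : ∫⁻ y, besselKernel n α (x - y) * (f₁ y * I ^ (s - 1))
        = I ^ (s - 1) * I := by
      have hcomm : ∀ y, besselKernel n α (x - y) * (f₁ y * I ^ (s - 1))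
          = I ^ (s - 1) * (besselKernel n α (x - y) * f₁ y) := fun y => by ring
      simp_rw [hcomm]
      rw [lintegral_const_mul' _ _ hIs]
      rfl
    have hfin : I ^ s ≤ I ^ (s - 1) * I := by
      rcases eq_or_ne I 0 with h0 | h0
      · simp [h0, ENNReal.zero_rpow_of_pos (by linarith : (0:ℝ) < s)]
      · have heq2 : I ^ (s - 1) * I = I ^ s := by
          nth_rewrite 2 [← ENNReal.rpow_one I]
          rw [← ENNReal.rpow_add _ _ h0 hItop]
          norm_num
        rw [heq2]
    calc I ^ s ≤ I ^ (s - 1) * I := hfin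
      _ = _ := heq.symm
      _ ≤ _ := hstep

end
end
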